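/- arXiv:2603.04369 — 9 statements merged into one kernel-verified Lean document; each statement's English description precedes it below -/
import Mathlib

section
/- Let d ≥ 1 and let f₀ : ℝ^d → ℝ be everywhere positive and differentiable, and let α ∈ ℝ^d satisfy αᵢ ≠ 0 for every i ∈ {1,…,d}. Then the following are equivalent: (i) there exists β ∈ ℝ^d such that for all θ ∈ ℝ^d, Σ_{i=1}^d αᵢ ∂f₀/∂θᵢ(θ) = f₀(θ) Σ_{i=1}^d βᵢ sin(θᵢ); (ii) there exists γ ∈ ℝ^d such that the function h₀(θ) := f₀(θ) · exp(Σ_{i=1}^d γᵢ cos(θᵢ)) satisfies h₀(θ + t·α) = h₀(θ) for all t ∈ ℝ and all θ ∈ ℝ^d. -/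
/-!
Put `h₀ θ = f₀ θ * exp (∑ i, γ i * cos (θ i))`. Since `h₀` is differentiable, it is invariant under
the flow `θ ↦ θ + t • α` exactly when its derivative in direction `α` vanishes, and by the product
and chain rules that derivative is
`exp (∑ i, γ i * cos (θ i)) * (∑ i, α i * ∂ᵢ f₀ θ - f₀ θ * ∑ i, γ i * α i * sin (θ i))`.
So (ii) holds for `γ` iff (i) holds for `β i = γ i * α i`, and as every `α i ≠ 0`,
each `β` arises this way from `γ i = β i / α i`.
-/

open Real

theorem ContinuousLinearMap.apply_eq_sum_smul_pi_single {ι R M : Type*} [Fintype ι] [DecidableEq ι]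
    [Semiring R] [TopologicalSpace R] [AddCommMonoid M] [Module R M] [TopologicalSpace M]
    (L : (ι → R) →L[R] M) (x : ι → R) :
    L x = ∑ i, x i • L (Pi.single i 1) := by
  conv_lhs => rw [← Finset.univ_sum_single x]
  simp_rw [map_sum, ← map_smul, ← Pi.single_smul', smul_eq_mul, mul_one]

theorem translation_invariant_iff_fderiv_apply_eq_zero {E F : Type*} [NormedAddCommGroup E]
    [NormedSpace ℝ E] [NormedAddCommGroup F] [NormedSpace ℝ F] {h : E → F}
    (hh : Differentiable ℝ h) (v : E) :
    (∀ (t : ℝ) x, h (x + t • v) = h x) ↔ ∀ x, fderiv ℝ h x v = 0 := by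
  have hline : ∀ x (t : ℝ), HasDerivAt (fun s : ℝ => h (x + s • v)) (fderiv ℝ h (x + t • v) v) t :=
    fun x t => (hh _).hasFDerivAt.comp_hasDerivAt t
      (by simpa using ((hasDerivAt_id t).smul_const v).const_add x)
  constructor
  · intro hinv x
    have hconst : (fun s : ℝ => h (x + s • v)) = fun _ => h x := funext fun s => hinv s x
    simpa [hconst] using (hline x 0).deriv.symm
  · intro hzero t x
    simpa using is_const_of_deriv_eq_zero (fun s => (hline x s).differentiableAt)
      (fun s => by simpa [hzero] using (hline x s).deriv) t 0

theorem fderiv_mul_exp_sum_cos_apply {ι : Type*} [Fintype ι] {f : (ι → ℝ) → ℝ}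
    (hf : Differentiable ℝ f) (γ θ v : ι → ℝ) :
    fderiv ℝ (fun θ => f θ * exp (∑ i, γ i * cos (θ i))) θ v =
      exp (∑ i, γ i * cos (θ i)) * (fderiv ℝ f θ v - f θ * ∑ i, γ i * v i * sin (θ i)) := by
  have hcos : HasFDerivAt (fun θ : ι → ℝ => ∑ i, γ i * cos (θ i))
      (∑ i, γ i • (-sin (θ i)) • ContinuousLinearMap.proj i) θ :=
    HasFDerivAt.fun_sum fun i _ => ((hasFDerivAt_apply i θ).cos).const_mul (γ i)
  have hsum : ∑ i, γ i * (-sin (θ i) * v i) = -∑ i, γ i * v i * sin (θ i) := by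
    rw [← Finset.sum_neg_distrib]
    exact Finset.sum_congr rfl fun i _ => by ring
  rw [((hf θ).hasFDerivAt.fun_mul hcos.exp).fderiv]
  simp only [add_apply, smul_apply, sum_apply, ContinuousLinearMap.proj_apply, smul_eq_mul, hsum]
  ring

theorem stmt0_general (d : ℕ) (f₀ : (Fin d → ℝ) → ℝ)
    (hdiff : Differentiable ℝ f₀)
    (α : Fin d → ℝ) (hα : ∀ i, α i ≠ 0) :
    (∃ β : Fin d → ℝ, ∀ θ : Fin d → ℝ,
        ∑ i, α i * fderiv ℝ f₀ θ (Pi.single i 1) =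
          f₀ θ * ∑ i, β i * Real.sin (θ i)) ↔
    (∃ γ : Fin d → ℝ, ∀ (t : ℝ) (θ : Fin d → ℝ),
        f₀ (θ + t • α) * Real.exp (∑ i, γ i * Real.cos (θ i + t * α i)) =
          f₀ θ * Real.exp (∑ i, γ i * Real.cos (θ i))) := by
  have hinvariant : ∀ γ : Fin d → ℝ,
      (∀ (t : ℝ) (θ : Fin d → ℝ),
        f₀ (θ + t • α) * exp (∑ i, γ i * cos (θ i + t * α i)) =
          f₀ θ * exp (∑ i, γ i * cos (θ i))) ↔
      ∀ θ : Fin d → ℝ, ∑ i, α i * fderiv ℝ f₀ θ (Pi.single i 1) =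
          f₀ θ * ∑ i, (γ i * α i) * sin (θ i) := by
    intro γ
    refine (translation_invariant_iff_fderiv_apply_eq_zero
      (h := fun θ => f₀ θ * exp (∑ i, γ i * cos (θ i))) (by fun_prop) α).trans ?_
    simp only [fderiv_mul_exp_sum_cos_apply hdiff, mul_eq_zero, exp_ne_zero, false_or,
      sub_eq_zero, (fderiv ℝ f₀ _).apply_eq_sum_smul_pi_single α, smul_eq_mul, mul_comm (α _)]
  simp_rw [hinvariant]
  constructor
  · rintro ⟨β, hβ⟩
    exact ⟨β / α, by simpa [div_mul_cancel₀ _ (hα _)] using hβ⟩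
  · rintro ⟨γ, hγ⟩
    exact ⟨γ * α, hγ⟩

theorem stmt0 (d : ℕ) (hd : 1 ≤ d) (f₀ : (Fin d → ℝ) → ℝ)
    (hpos : ∀ θ, 0 < f₀ θ) (hdiff : Differentiable ℝ f₀)
    (α : Fin d → ℝ) (hα : ∀ i, α i ≠ 0) :
    (∃ β : Fin d → ℝ, ∀ θ : Fin d → ℝ,
        ∑ i, α i * fderiv ℝ f₀ θ (Pi.single i 1) =
          f₀ θ * ∑ i, β i * Real.sin (θ i)) ↔
    (∃ γ : Fin d → ℝ, ∀ (t : ℝ) (θ : Fin d → ℝ),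
        f₀ (θ + t • α) * Real.exp (∑ i, γ i * Real.cos (θ i + t * α i)) =
          f₀ θ * Real.exp (∑ i, γ i * Real.cos (θ i))) :=
  stmt0_general d f₀ hdiff α hα
end

section
/- Let d ≥ 1 and let f₀ : ℝ^d → ℝ be everywhere positive and continuously differentiable. Suppose there exist α ∈ ℝ^d with αᵢ ≠ 0 for all i and γ ∈ ℝ^d such that h₀(θ) := f₀(θ) exp(Σ_{i=1}^d γᵢ cos(θᵢ)) satisfies h₀(θ + t·α) = h₀(θ) for all t ∈ ℝ and θ ∈ ℝ^d. Then the Fisher information matrix I ∈ ℝ^{2d × 2d}, with entries I_{ab} = ∫_{[−π,π]^d} S_a(θ) S_b(θ) f₀(θ) dθ where Sᵢ(θ) = −(∂f₀/∂θᵢ)(θ)/f₀(θ) for i ≤ d and S_{d+j}(θ) = sin(θⱼ) for j ≤ d, is not invertible. -/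
/-!
Differentiating the invariance `h₀(θ + tα) = h₀(θ)` at `t = 0` gives
`∇f₀(θ)·α = f₀(θ) Σᵢ γᵢ αᵢ sin θᵢ`, i.e. the score satisfies `S(θ) · v = 0` for every `θ`, where
`v = (α, γ ⊙ α) ≠ 0`. Hence `I v = ∫ S (S · v) f₀ = 0`, so `I` has a nontrivial kernel.
-/

open Real MeasureTheory Matrix

lemma Matrix.of_integral_mul_mulVec_eq_zero {X ι : Type*} [Fintype ι] [MeasurableSpace X]
    {μ : Measure X} {S : X → ι → ℝ} {w : X → ℝ}
    (hint : ∀ a b, Integrable (fun x => S x a * S x b * w x) μ)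
    {v : ι → ℝ} (hv : ∀ᵐ x ∂μ, S x ⬝ᵥ v = 0) :
    (Matrix.of fun a b => ∫ x, S x a * S x b * w x ∂μ) *ᵥ v = 0 := by
  funext a
  calc ∑ b, (∫ x, S x a * S x b * w x ∂μ) * v b
      = ∫ x, ∑ b, S x a * S x b * w x * v b ∂μ := by
        rw [integral_finsetSum _ fun b _ => (hint a b).mul_const (v b)]
        simp only [integral_mul_const]
    _ = ∫ x, S x a * w x * (S x ⬝ᵥ v) ∂μ := by
        refine integral_congr_ae (.of_forall fun x => ?_)
        simp only [dotProduct, Finset.mul_sum]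
        exact Finset.sum_congr rfl fun b _ => by ring
    _ = 0 := by
        rw [integral_eq_zero_of_ae]
        filter_upwards [hv] with x hx
        simp [hx]

lemma fderiv_apply_eq_of_mul_exp_invariant {E : Type*} [NormedAddCommGroup E]
    [NormedSpace ℝ E] {f c : E → ℝ} {θ α : E} {c' : ℝ} (hf : DifferentiableAt ℝ f θ)
    (hc : HasDerivAt (fun t : ℝ => c (θ + t • α)) c' 0)
    (hinv : ∀ t : ℝ, f (θ + t • α) * exp (c (θ + t • α)) = f θ * exp (c θ)) :
    fderiv ℝ f θ α = -(f θ * c') := by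
  have hline : HasDerivAt (fun t : ℝ => θ + t • α) α 0 := by
    simpa using ((hasDerivAt_id (0 : ℝ)).smul_const α).const_add θ
  have hprod := (hf.hasFDerivAt.comp_hasDerivAt_of_eq 0 hline (by simp)).mul hc.exp
  have hconst : HasDerivAt (fun t : ℝ => f (θ + t • α) * exp (c (θ + t • α))) 0 0 := by
    simp_rw [hinv]
    exact hasDerivAt_const _ _
  have hderiv := hprod.unique hconst
  simp only [Function.comp_apply, zero_smul, add_zero] at hderiv
  have : (fderiv ℝ f θ α + f θ * c') * exp (c θ) = 0 := by rw [← hderiv]; ring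
  linarith [(mul_eq_zero.mp this).resolve_right (exp_ne_zero _)]

lemma hasDerivAt_sum_mul_cos_add_smul {ι : Type*} [Fintype ι] (γ θ α : ι → ℝ) :
    HasDerivAt (fun t : ℝ => ∑ i, γ i * cos ((θ + t • α) i))
      (-∑ i, γ i * α i * sin (θ i)) 0 := by
  rw [← Finset.sum_neg_distrib]
  refine HasDerivAt.fun_sum fun i _ => ?_
  show HasDerivAt (fun t : ℝ => γ i * cos (θ i + t * α i)) _ 0
  exact (((hasDerivAt_mul_const (α i)).const_add (θ i)).cos.const_mul (γ i)).congr_deriv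
    (by simp; ring)

section Score

variable {ι : Type*} [Fintype ι] [DecidableEq ι]

noncomputable def sineSkewedScore (f₀ : (ι → ℝ) → ℝ) (θ : ι → ℝ) : ι ⊕ ι → ℝ :=
  Sum.elim (fun i => -(fderiv ℝ f₀ θ (Pi.single i 1)) / f₀ θ) (fun j => sin (θ j))

lemma continuous_sineSkewedScore_apply {f₀ : (ι → ℝ) → ℝ} (hf : ContDiff ℝ 1 f₀)
    (hne : ∀ θ, f₀ θ ≠ 0) (a : ι ⊕ ι) : Continuous fun θ => sineSkewedScore f₀ θ a := by
  rcases a with i | j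
  · exact ((hf.continuous_fderiv one_ne_zero).clm_apply continuous_const).neg.div
      hf.continuous hne
  · exact continuous_sin.comp (continuous_apply j)

lemma sineSkewedScore_dotProduct_eq_zero {f₀ : (ι → ℝ) → ℝ} {θ α γ : ι → ℝ} (hne : f₀ θ ≠ 0)
    (hder : fderiv ℝ f₀ θ α = f₀ θ * ∑ i, γ i * α i * sin (θ i)) :
    sineSkewedScore f₀ θ ⬝ᵥ Sum.elim α (γ * α) = 0 := by
  have hα : fderiv ℝ f₀ θ α = ∑ i, α i * fderiv ℝ f₀ θ (Pi.single i 1) := by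
    conv_lhs => rw [pi_eq_sum_univ' α]
    simp [map_sum]
  rw [sineSkewedScore, sumElim_dotProduct_sumElim]
  simp only [dotProduct, Pi.mul_apply, neg_div, neg_mul, Finset.sum_neg_distrib, div_mul_eq_mul_div,
    ← Finset.sum_div]
  rw [Finset.sum_congr rfl fun i _ => mul_comm _ _, ← hα, hder, mul_div_cancel_left₀ _ hne]
  rw [neg_add_eq_zero]
  exact Finset.sum_congr rfl fun i _ => by ring

end Score

theorem stmt2 (d : ℕ) (hd : 1 ≤ d) (f₀ : (Fin d → ℝ) → ℝ)
    (hpos : ∀ θ, 0 < f₀ θ) (hdiff : ContDiff ℝ 1 f₀)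
    (α : Fin d → ℝ) (hα : ∀ i, α i ≠ 0) (γ : Fin d → ℝ)
    (hinv : ∀ (t : ℝ) (θ : Fin d → ℝ),
      f₀ (θ + t • α) * Real.exp (∑ i, γ i * Real.cos (θ i + t * α i)) =
        f₀ θ * Real.exp (∑ i, γ i * Real.cos (θ i)))
    (S : (Fin d → ℝ) → (Fin d ⊕ Fin d) → ℝ)
    (hS : ∀ θ, S θ = Sum.elim
        (fun i => -(fderiv ℝ f₀ θ (Pi.single i 1)) / f₀ θ)
        (fun j => Real.sin (θ j)))
    (I : Matrix (Fin d ⊕ Fin d) (Fin d ⊕ Fin d) ℝ)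
    (hI : ∀ a b, I a b =
        ∫ θ in (Set.Icc (fun _ => -π) (fun _ => π) : Set (Fin d → ℝ)),
          S θ a * S θ b * f₀ θ) :
    ¬ IsUnit I := by
  obtain rfl : S = sineSkewedScore f₀ := funext hS
  have hne θ : f₀ θ ≠ 0 := (hpos θ).ne'
  have hnull θ : sineSkewedScore f₀ θ ⬝ᵥ Sum.elim α (γ * α) = 0 := by
    refine sineSkewedScore_dotProduct_eq_zero (hne θ) ?_
    rw [fderiv_apply_eq_of_mul_exp_invariant (c := fun θ : Fin d → ℝ => ∑ i, γ i * cos (θ i))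
      (hdiff.differentiable one_ne_zero θ) (hasDerivAt_sum_mul_cos_add_smul γ θ α) (hinv · θ),
      mul_neg, neg_neg]
  have hIv : I *ᵥ Sum.elim α (γ * α) = 0 := by
    rw [show I = _ from Matrix.ext hI]
    refine Matrix.of_integral_mul_mulVec_eq_zero (fun a b => ?_) (.of_forall hnull)
    exact ((continuous_sineSkewedScore_apply hdiff hne a).mul
      (continuous_sineSkewedScore_apply hdiff hne b) |>.mul hdiff.continuous).continuousOn
      |>.integrableOn_compact isCompact_Icc
  intro hunit
  have hv := mulVec_injective_of_isUnit hunit (hIv.trans (mulVec_zero I).symm)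
  exact hα ⟨0, hd⟩ (congr_fun hv (Sum.inl ⟨0, hd⟩))
end

section
/- Let d ≥ 1, let f₀ : ℝ^d → ℝ be everywhere positive and differentiable, let α ∈ ℝ^d with αᵢ ≠ 0 for all i, let β ∈ ℝ^d, and set γᵢ = βᵢ/αᵢ for i = 1,…,d. Define h₀(θ) = f₀(θ) exp(Σ_{i=1}^d γᵢ cos(θᵢ)). Then Σ_{i=1}^d αᵢ ∂f₀/∂θᵢ(θ) = f₀(θ) Σ_{i=1}^d βᵢ sin(θᵢ) holds for all θ ∈ ℝ^d if and only if Σ_{i=1}^d αᵢ ∂h₀/∂θᵢ(θ) = 0 holds for all θ ∈ ℝ^d. -/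
/-!
Writing `g θ = ∑ γₖ cos θₖ`, the derivative of `h₀ = f₀ · exp g` in the direction `α` is
`exp (g θ) · (∂_α f₀ θ - f₀ θ ∑ γₖ αₖ sin θₖ)`, and `γₖ αₖ = βₖ` because `αₖ ≠ 0`.
Since `exp` never vanishes, `∂_α h₀ = 0` exactly when `∂_α f₀ = f₀ ∑ βₖ sin θₖ`.
-/

open Real

lemma ContinuousLinearMap.apply_eq_sum_mul_single {ι : Type*} [Fintype ι] [DecidableEq ι]
    (L : (ι → ℝ) →L[ℝ] ℝ) (v : ι → ℝ) :
    L v = ∑ i, v i * L (Pi.single i 1) := by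
  conv_lhs => rw [← Finset.univ_sum_single v]
  simp_rw [map_sum, ← smul_eq_mul, ← map_smul, ← Pi.single_smul, smul_eq_mul, mul_one]

lemma fderiv_mul_exp_apply {E : Type*} [NormedAddCommGroup E] [NormedSpace ℝ E]
    {f g : E → ℝ} {x : E} (hf : DifferentiableAt ℝ f x) (hg : DifferentiableAt ℝ g x) (v : E) :
    fderiv ℝ (fun y => f y * exp (g y)) x v =
      exp (g x) * (fderiv ℝ f x v + f x * fderiv ℝ g x v) := by
  rw [fderiv_fun_mul hf hg.exp, fderiv_exp hg]
  simp only [add_apply, smul_apply, smul_eq_mul]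
  ring

lemma hasFDerivAt_sum_mul_cos {ι : Type*} [Fintype ι] (γ θ : ι → ℝ) :
    HasFDerivAt (fun θ' : ι → ℝ => ∑ k, γ k * cos (θ' k))
      (∑ k, γ k • (-sin (θ k)) • ContinuousLinearMap.proj (R := ℝ) (φ := fun _ : ι => ℝ) k) θ :=
  HasFDerivAt.fun_sum fun k _ => ((hasFDerivAt_apply k θ).cos).const_mul (γ k)

lemma fderiv_sum_mul_cos_apply {ι : Type*} [Fintype ι] (γ θ v : ι → ℝ) :
    fderiv ℝ (fun θ' : ι → ℝ => ∑ k, γ k * cos (θ' k)) θ v = -∑ k, γ k * sin (θ k) * v k := by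
  rw [(hasFDerivAt_sum_mul_cos γ θ).fderiv]
  simp [← Finset.sum_neg_distrib, mul_assoc]

theorem stmt5_general (d : ℕ) (f₀ : (Fin d → ℝ) → ℝ)
    (hdiff : Differentiable ℝ f₀)
    (α : Fin d → ℝ) (hα : ∀ i, α i ≠ 0) (β : Fin d → ℝ) :
    (∀ θ : Fin d → ℝ, ∑ i, α i * fderiv ℝ f₀ θ (Pi.single i 1) =
        f₀ θ * ∑ i, β i * Real.sin (θ i)) ↔
    (∀ θ : Fin d → ℝ, ∑ i, α i *
        fderiv ℝ (fun θ' => f₀ θ' * Real.exp (∑ k, (β k / α k) * Real.cos (θ' k))) θ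
          (Pi.single i 1) = 0) := by
  have hβ : ∀ k, β k / α k * α k = β k := fun k => div_mul_cancel₀ _ (hα k)
  have hderiv : ∀ θ : Fin d → ℝ, ∑ i, α i *
      fderiv ℝ (fun θ' => f₀ θ' * exp (∑ k, (β k / α k) * cos (θ' k))) θ (Pi.single i 1) =
      exp (∑ k, (β k / α k) * cos (θ k)) *
        (∑ i, α i * fderiv ℝ f₀ θ (Pi.single i 1) - f₀ θ * ∑ i, β i * sin (θ i)) := by
    intro θ
    simp_rw [← ContinuousLinearMap.apply_eq_sum_mul_single,
      fderiv_mul_exp_apply (hdiff θ) (hasFDerivAt_sum_mul_cos _ θ).differentiableAt,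
      fderiv_sum_mul_cos_apply, mul_right_comm _ (sin _), hβ, mul_comm (β _)]
    ring
  refine forall_congr' fun θ => ?_
  rw [hderiv, mul_eq_zero, sub_eq_zero]
  simp [exp_ne_zero]

theorem stmt5 (d : ℕ) (hd : 1 ≤ d) (f₀ : (Fin d → ℝ) → ℝ)
    (hpos : ∀ θ, 0 < f₀ θ) (hdiff : Differentiable ℝ f₀)
    (α : Fin d → ℝ) (hα : ∀ i, α i ≠ 0) (β : Fin d → ℝ) :
    (∀ θ : Fin d → ℝ, ∑ i, α i * fderiv ℝ f₀ θ (Pi.single i 1) =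
        f₀ θ * ∑ i, β i * Real.sin (θ i)) ↔
    (∀ θ : Fin d → ℝ, ∑ i, α i *
        fderiv ℝ (fun θ' => f₀ θ' * Real.exp (∑ k, (β k / α k) * Real.cos (θ' k))) θ
          (Pi.single i 1) = 0) :=
  stmt5_general d f₀ hdiff α hα β
end

section
/- Let d ≥ 1, let f₀ : ℝ^d → [0,∞) be measurable with f₀(θ + 2π k) = f₀(θ) for all θ ∈ ℝ^d and k ∈ ℤ^d, f₀(−θ) = f₀(θ) for all θ, and ∫_{[−π,π]^d} f₀(θ) dθ = 1. Let μ ∈ ℝ^d and λ ∈ ℝ^d with Σ_{j=1}^d |λⱼ| ≤ 1. Then the sine-skewed function f_{μ,λ}(θ) := f₀(θ − μ) · (1 + Σ_{j=1}^d λⱼ sin(θⱼ − μⱼ)) satisfies f_{μ,λ}(θ) ≥ 0 for all θ ∈ ℝ^d and ∫_{[−π,π]^d} f_{μ,λ}(θ) dθ = 1; that is, f_{μ,λ} is a probability density on [−π,π]^d. -/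
/-!
Since `|∑ j, λⱼ sin xⱼ| ≤ ∑ j, |λⱼ| ≤ 1`, the factor `1 + ∑ j, λⱼ sin (θⱼ - μⱼ)` is nonnegative.
For the integral, the integrand is `g (θ - μ)` with `g θ = f₀ θ (1 + ∑ j, λⱼ sin θⱼ)` invariant
under the lattice `2πℤᵈ`. Every translate of the half-open box `[-π, π)ᵈ` is a fundamental domain
of this lattice, so shifting by `μ` does not change the integral of `g`. Finally
`f₀ θ · ∑ j, λⱼ sin θⱼ` is odd, because `f₀` is even, and integrates to zero over the symmetric
box, leaving `∫ f₀ = 1`.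
-/

open Real MeasureTheory

open Set

variable {E : Type*} [NormedAddCommGroup E] [NormedSpace ℝ E]

section Lattice

variable {ι : Type*} {T : ℝ}

/-- The lattice `T ℤ^ι`, consisting of the vectors `fun i => T * k i` with `k : ι → ℤ`. -/
def periodLattice (ι : Type*) (T : ℝ) : AddSubgroup (ι → ℝ) :=
  (AddMonoidHom.compLeft ((AddMonoidHom.mulLeft T).comp (Int.castAddHom ℝ)) ι).range

instance [Finite ι] : Countable (periodLattice ι T) :=
  (AddMonoidHom.rangeRestrict_surjective _).countable

theorem isAddFundamentalDomain_pi_Ico [Fintype ι] (hT : 0 < T) (a : ι → ℝ) :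
    IsAddFundamentalDomain (periodLattice ι T) (univ.pi fun i => Ico (a i) (a i + T)) := by
  refine .mk' (MeasurableSet.univ_pi fun _ => measurableSet_Ico).nullMeasurableSet fun x => ?_
  choose m hm hm_unique using fun i => existsUnique_add_zsmul_mem_Ico hT (x i) (a i)
  have hmem : ∀ (k : ι → ℤ) i,
      T * k i + x i ∈ Ico (a i) (a i + T) ↔ x i + k i • T ∈ Ico (a i) (a i + T) := by
    intro k i
    rw [zsmul_eq_mul, mul_comm (k i : ℝ), add_comm (x i)]
  refine ⟨⟨_, m, rfl⟩, fun i _ => (hmem m i).2 (hm i), ?_⟩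
  rintro ⟨_, k, rfl⟩ hk
  ext i
  simp only [funext fun i => hm_unique i (k i) ((hmem k i).1 (hk i trivial))]

theorem setIntegral_pi_Ico_comp_sub_of_periodic [Fintype ι] (hT : 0 < T) {f : (ι → ℝ) → E}
    (hf : ∀ x (k : ι → ℤ), f (x + fun i => T * k i) = f x) (a c : ι → ℝ) :
    ∫ x in univ.pi (fun i => Ico (a i) (a i + T)), f (x - c) =
      ∫ x in univ.pi (fun i => Ico (a i) (a i + T)), f x := by
  have hpre : (· - c) ⁻¹' univ.pi (fun i => Ico ((a - c) i) ((a - c) i + T)) =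
      univ.pi fun i => Ico (a i) (a i + T) := by
    ext x
    simp only [mem_preimage, mem_univ_pi, mem_Ico, Pi.sub_apply]
    refine forall_congr' fun i => and_congr ?_ ?_ <;> constructor <;> intro h <;> linarith
  calc ∫ x in univ.pi (fun i => Ico (a i) (a i + T)), f (x - c)
      = ∫ x in (· - c) ⁻¹' univ.pi (fun i => Ico ((a - c) i) ((a - c) i + T)), f (x - c) := by
        rw [hpre]
    _ = ∫ x in univ.pi (fun i => Ico ((a - c) i) ((a - c) i + T)), f x :=
        (measurePreserving_sub_right volume c).setIntegral_preimage_emb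
          (measurableEmbedding_subRight c) f _
    _ = ∫ x in univ.pi (fun i => Ico (a i) (a i + T)), f x := by
        refine (isAddFundamentalDomain_pi_Ico hT (a - c)).setIntegral_eq
          (isAddFundamentalDomain_pi_Ico hT a) ?_
        rintro ⟨_, k, rfl⟩ x
        exact (congrArg f (add_comm _ x)).trans (hf x k)

theorem setIntegral_Icc_comp_sub_of_periodic [Fintype ι] (hT : 0 < T) {f : (ι → ℝ) → E}
    (hf : ∀ x (k : ι → ℤ), f (x + fun i => T * k i) = f x) (a c : ι → ℝ) :
    ∫ x in Icc a (a + fun _ => T), f (x - c) = ∫ x in Icc a (a + fun _ => T), f x := by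
  have hae : (univ.pi fun i => Ico (a i) (a i + T)) =ᵐ[volume] Icc a (a + fun _ => T) :=
    Measure.univ_pi_Ico_ae_eq_Icc
  rw [← setIntegral_congr_set hae, ← setIntegral_congr_set hae]
  exact setIntegral_pi_Ico_comp_sub_of_periodic hT hf a c

end Lattice

theorem setIntegral_eq_zero_of_odd {G : Type*} [MeasurableSpace G] [AddGroup G] [MeasurableNeg G]
    {μ : Measure G} [μ.IsNegInvariant] {s : Set G} (hs : MeasurableSet s) (hs_neg : -s = s)
    {f : G → E} (hf : ∀ x, f (-x) = -f x) : ∫ x in s, f x ∂μ = 0 := by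
  have : IsAddTorsionFree E := .of_isTorsionFree ℝ E
  rw [← integral_indicator hs, ← self_eq_neg, ← integral_neg, ← integral_neg_eq_self _ μ]
  congr with x
  by_cases hx : x ∈ s
  · have : -x ∈ s := by rwa [← hs_neg, mem_neg, neg_neg]
    simp [hx, this, hf]
  · have : -x ∉ s := by rwa [← hs_neg, mem_neg, neg_neg]
    simp [hx, this]

theorem abs_sum_mul_sin_le {ι : Type*} (s : Finset ι) (c x : ι → ℝ) :
    |∑ j ∈ s, c j * sin (x j)| ≤ ∑ j ∈ s, |c j| :=
  (Finset.abs_sum_le_sum_abs _ _).trans <| Finset.sum_le_sum fun j _ => by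
    rw [abs_mul]
    exact mul_le_of_le_one_right (abs_nonneg _) (abs_sin_le_one _)

theorem stmt6_general (d : ℕ) (f₀ : (Fin d → ℝ) → ℝ)
    (hnonneg : ∀ θ, 0 ≤ f₀ θ)
    (hper : ∀ (θ : Fin d → ℝ) (k : Fin d → ℤ),
      f₀ (θ + fun i => 2 * π * (k i : ℝ)) = f₀ θ)
    (heven : ∀ θ, f₀ (-θ) = f₀ θ)
    (hint : ∫ θ in (Set.Icc (fun _ => -π) (fun _ => π) : Set (Fin d → ℝ)), f₀ θ = 1)
    (μ lam : Fin d → ℝ) (hlam : ∑ j, |lam j| ≤ 1) :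
    (∀ θ : Fin d → ℝ,
      0 ≤ f₀ (θ - μ) * (1 + ∑ j, lam j * Real.sin (θ j - μ j))) ∧
    ∫ θ in (Set.Icc (fun _ => -π) (fun _ => π) : Set (Fin d → ℝ)),
      f₀ (θ - μ) * (1 + ∑ j, lam j * Real.sin (θ j - μ j)) = 1 := by
  set S : (Fin d → ℝ) → ℝ := fun θ => ∑ j, lam j * sin (θ j)
  have hS : ∀ θ, |S θ| ≤ 1 := fun θ => (abs_sum_mul_sin_le _ lam θ).trans hlam
  have hS_nonneg : ∀ θ, 0 ≤ 1 + S θ := fun θ => by linarith [neg_abs_le (S θ), hS θ]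
  refine ⟨fun θ => mul_nonneg (hnonneg _) (hS_nonneg (θ - μ)), ?_⟩
  set box : Set (Fin d → ℝ) := Icc (fun _ => -π) (fun _ => π)
  have hbox : box = Icc (fun _ => -π) ((fun _ => -π) + fun _ => 2 * π) := by
    have : ((fun _ => -π) + fun _ => 2 * π : Fin d → ℝ) = fun _ => π := by
      ext; simp only [Pi.add_apply]; ring
    rw [this]
  have hper_g : ∀ θ (k : Fin d → ℤ), f₀ (θ + fun i => 2 * π * k i) *
      (1 + S (θ + fun i => 2 * π * k i)) = f₀ θ * (1 + S θ) := by
    intro θ k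
    rw [hper]
    simp only [S, Pi.add_apply, mul_comm (2 * π), sin_add_int_mul_two_pi]
  have hf₀ : IntegrableOn f₀ box :=
    Integrable.of_integral_ne_zero (by rw [hint]; exact one_ne_zero)
  have hf₀S : IntegrableOn (fun θ => f₀ θ * S θ) box :=
    hf₀.mul_bdd (by fun_prop : Continuous S).aestronglyMeasurable.restrict (.of_forall hS)
  have hf₀S_odd : ∀ θ, f₀ (-θ) * S (-θ) = -(f₀ θ * S θ) := by
    intro θ; simp [S, heven, Finset.sum_neg_distrib]
  calc ∫ θ in box, f₀ (θ - μ) * (1 + ∑ j, lam j * sin (θ j - μ j))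
      = ∫ θ in box, f₀ θ * (1 + S θ) := by
        rw [hbox]
        exact setIntegral_Icc_comp_sub_of_periodic two_pi_pos
          (f := fun θ => f₀ θ * (1 + S θ)) hper_g _ μ
    _ = (∫ θ in box, f₀ θ) + ∫ θ in box, f₀ θ * S θ := by
        rw [← integral_add hf₀ hf₀S]; simp only [mul_add, mul_one]
    _ = 1 := by
        rw [hint, setIntegral_eq_zero_of_odd measurableSet_Icc (by simp [neg_Icc, Pi.neg_def])
          hf₀S_odd, add_zero]

theorem stmt6 (d : ℕ) (hd : 1 ≤ d) (f₀ : (Fin d → ℝ) → ℝ)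
    (hmeas : Measurable f₀) (hnonneg : ∀ θ, 0 ≤ f₀ θ)
    (hper : ∀ (θ : Fin d → ℝ) (k : Fin d → ℤ),
      f₀ (θ + fun i => 2 * π * (k i : ℝ)) = f₀ θ)
    (heven : ∀ θ, f₀ (-θ) = f₀ θ)
    (hint : ∫ θ in (Set.Icc (fun _ => -π) (fun _ => π) : Set (Fin d → ℝ)), f₀ θ = 1)
    (μ lam : Fin d → ℝ) (hlam : ∑ j, |lam j| ≤ 1) :
    (∀ θ : Fin d → ℝ,
      0 ≤ f₀ (θ - μ) * (1 + ∑ j, lam j * Real.sin (θ j - μ j))) ∧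
    ∫ θ in (Set.Icc (fun _ => -π) (fun _ => π) : Set (Fin d → ℝ)),
      f₀ (θ - μ) * (1 + ∑ j, lam j * Real.sin (θ j - μ j)) = 1 :=
  stmt6_general d f₀ hnonneg hper heven hint μ lam hlam
end

section
/- Let f₀ : ℝ → ℝ be everywhere positive and differentiable. Then there exists a pair (α, β) ∈ ℝ² with (α, β) ≠ (0, 0) such that α f₀′(θ) = β f₀(θ) sin(θ) for all θ ∈ ℝ, if and only if there exists κ ∈ ℝ such that f₀(θ) = f₀(0) · exp(κ (cos(θ) − 1)) for all θ ∈ ℝ (i.e., f₀ is proportional to a von Mises density). -/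
/-!
If `α ≠ 0` the relation is the linear equation `f₀' = (β / α) sin θ · f₀`, whose solutions are
`f₀ 0 * exp (-(β / α) (cos θ - 1))`. If `α = 0` then `f₀ θ sin θ = 0` everywhere; the zeros of
`sin` are countable, so by continuity `f₀ = 0`, which has the required form for every `κ`.
-/

open Real

theorem eq_mul_exp_sub_of_deriv_eq_mul {f a a' : ℝ → ℝ} (hf : Differentiable ℝ f)
    (ha : ∀ x, HasDerivAt a (a' x) x) (hfa : ∀ x, deriv f x = a' x * f x) (x y : ℝ) :
    f x = f y * exp (a x - a y) := by
  set g : ℝ → ℝ := fun x => f x * exp (-a x)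
  have hg : ∀ x, HasDerivAt g 0 x := fun x =>
    ((hf x).hasDerivAt.mul (ha x).neg.exp).congr_deriv (by rw [hfa x, Pi.neg_apply]; ring)
  have hgxy : g x = g y :=
    is_const_of_deriv_eq_zero (fun x => (hg x).differentiableAt) (fun x => (hg x).deriv) x y
  calc f x = g x * exp (a x) := by
        simp only [g, mul_assoc, ← exp_add, neg_add_cancel, exp_zero, mul_one]
    _ = f y * exp (a x - a y) := by rw [hgxy, mul_assoc, ← exp_add]; ring_nf

theorem dense_setOf_sin_ne_zero : Dense {θ : ℝ | sin θ ≠ 0} := by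
  have hzeros : {θ : ℝ | sin θ = 0}.Countable := by
    convert Set.countable_range (fun n : ℤ => (n : ℝ) * π)
    ext θ
    simp [sin_eq_zero_iff]
  exact hzeros.dense_compl ℝ

theorem eq_zero_of_mul_sin_eq_zero {f : ℝ → ℝ} (hf : Continuous f) (h : ∀ θ, f θ * sin θ = 0) :
    f = 0 :=
  hf.ext_on dense_setOf_sin_ne_zero continuous_const
    fun _ hθ => (mul_eq_zero.mp (h _)).resolve_right hθ

theorem hasDerivAt_mul_exp_mul_cos_sub_one (C κ θ : ℝ) :
    HasDerivAt (fun θ => C * exp (κ * (cos θ - 1)))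
      (-κ * (C * exp (κ * (cos θ - 1))) * sin θ) θ :=
  (((hasDerivAt_cos θ).sub_const 1).const_mul κ).exp.const_mul C |>.congr_deriv (by ring)

theorem stmt8_general (f₀ : ℝ → ℝ) (hdiff : Differentiable ℝ f₀) :
    (∃ α β : ℝ, (α, β) ≠ (0, 0) ∧ ∀ θ : ℝ, α * deriv f₀ θ = β * f₀ θ * Real.sin θ) ↔
    (∃ κ : ℝ, ∀ θ : ℝ, f₀ θ = f₀ 0 * Real.exp (κ * (Real.cos θ - 1))) := by
  constructor
  · rintro ⟨α, β, hne, heq⟩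
    by_cases hα : α = 0
    · have hβ : β ≠ 0 := fun hβ => hne (by rw [hα, hβ])
      have hzero : f₀ = 0 := eq_zero_of_mul_sin_eq_zero hdiff.continuous fun θ => by
        simpa [hα, hβ, mul_assoc] using (heq θ).symm
      exact ⟨0, fun θ => by simp [hzero]⟩
    · refine ⟨-(β / α), fun θ => ?_⟩
      have hode : ∀ θ, deriv f₀ θ = β / α * sin θ * f₀ θ := fun θ => by
        field_simp; linarith [heq θ]
      have hprim : ∀ θ, HasDerivAt (fun θ => -(β / α) * cos θ) (β / α * sin θ) θ := fun θ => by
        simpa using (hasDerivAt_cos θ).const_mul (-(β / α))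
      rw [eq_mul_exp_sub_of_deriv_eq_mul hdiff hprim hode θ 0, cos_zero]
      ring_nf
  · rintro ⟨κ, hκ⟩
    have hf : f₀ = fun θ => f₀ 0 * exp (κ * (cos θ - 1)) := funext hκ
    refine ⟨1, -κ, by simp, fun θ => ?_⟩
    rw [one_mul, hf, (hasDerivAt_mul_exp_mul_cos_sub_one _ κ θ).deriv]

theorem stmt8 (f₀ : ℝ → ℝ) (hpos : ∀ θ, 0 < f₀ θ) (hdiff : Differentiable ℝ f₀) :
    (∃ α β : ℝ, (α, β) ≠ (0, 0) ∧ ∀ θ : ℝ, α * deriv f₀ θ = β * f₀ θ * Real.sin θ) ↔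
    (∃ κ : ℝ, ∀ θ : ℝ, f₀ θ = f₀ 0 * Real.exp (κ * (Real.cos θ - 1))) :=
  stmt8_general f₀ hdiff
end

section
/- Let κ₁, κ₂ ∈ ℝ, let λ ∈ ℝ with λ ≠ 0, let C > 0, and define the Sine density on ℝ² by f_S(θ₁, θ₂) = C · exp(κ₁ cos(θ₁) + κ₂ cos(θ₂) + λ sin(θ₁) sin(θ₂)). If α₁, α₂, β₁, β₂ ∈ ℝ satisfy α₁ ∂f_S/∂θ₁(θ) + α₂ ∂f_S/∂θ₂(θ) = f_S(θ) (β₁ sin(θ₁) + β₂ sin(θ₂)) for all θ = (θ₁, θ₂) ∈ ℝ², then α₁ = α₂ = β₁ = β₂ = 0. -/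
/-!
Dividing by `f_S > 0` turns the equation into an identity between the location scores
`∂ᵢ log f_S` and the skewness scores `sin θᵢ`. Evaluating it at `(π/2, 0)` and `(π/2, π)`
isolates `λ α₂`, at `(0, π/2)` and `(π, π/2)` it isolates `λ α₁`; once `α₁ = α₂ = 0`,
the same points give `β₁ = β₂ = 0`.
-/

open Real

noncomputable def sineExponent (κ₁ κ₂ lam θ₁ θ₂ : ℝ) : ℝ :=
  κ₁ * cos θ₁ + κ₂ * cos θ₂ + lam * sin θ₁ * sin θ₂

section SineExponent

variable (κ₁ κ₂ lam : ℝ)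

lemma sineExponent_comm (θ₁ θ₂ : ℝ) :
    sineExponent κ₁ κ₂ lam θ₁ θ₂ = sineExponent κ₂ κ₁ lam θ₂ θ₁ := by
  unfold sineExponent; ring

lemma hasDerivAt_sineExponent_fst (θ₁ θ₂ : ℝ) :
    HasDerivAt (fun s => sineExponent κ₁ κ₂ lam s θ₂)
      (-κ₁ * sin θ₁ + lam * cos θ₁ * sin θ₂) θ₁ := by
  have := (((hasDerivAt_cos θ₁).const_mul κ₁).add_const (κ₂ * cos θ₂)).add
    (((hasDerivAt_sin θ₁).const_mul lam).mul_const (sin θ₂))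
  exact this.congr_deriv (by ring)

lemma hasDerivAt_sineExponent_snd (θ₁ θ₂ : ℝ) :
    HasDerivAt (fun s => sineExponent κ₁ κ₂ lam θ₁ s)
      (-κ₂ * sin θ₂ + lam * sin θ₁ * cos θ₂) θ₂ := by
  simp only [sineExponent_comm κ₁ κ₂]
  exact (hasDerivAt_sineExponent_fst κ₂ κ₁ lam θ₂ θ₁).congr_deriv (by ring)

lemma coeffs_eq_zero_of_sine_score_identity {lam : ℝ} (hlam : lam ≠ 0) {α₁ α₂ β₁ β₂ : ℝ}
    (H : ∀ θ₁ θ₂ : ℝ,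
      α₁ * (-κ₁ * sin θ₁ + lam * cos θ₁ * sin θ₂) +
        α₂ * (-κ₂ * sin θ₂ + lam * sin θ₁ * cos θ₂) =
        β₁ * sin θ₁ + β₂ * sin θ₂) :
    α₁ = 0 ∧ α₂ = 0 ∧ β₁ = 0 ∧ β₂ = 0 := by
  have h₁ := H (π / 2) 0
  have h₂ := H (π / 2) π
  have h₃ := H 0 (π / 2)
  have h₄ := H π (π / 2)
  simp only [sin_pi_div_two, cos_pi_div_two, sin_zero, cos_zero, sin_pi, cos_pi] at h₁ h₂ h₃ h₄
  have hα₁ : α₁ = 0 := by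
    refine (mul_eq_zero.mp (?_ : α₁ * lam = 0)).resolve_right hlam
    linarith
  have hα₂ : α₂ = 0 := by
    refine (mul_eq_zero.mp (?_ : α₂ * lam = 0)).resolve_right hlam
    linarith
  subst hα₁ hα₂
  exact ⟨rfl, rfl, by linarith, by linarith⟩

end SineExponent

theorem stmt11 (κ₁ κ₂ lam : ℝ) (hlam : lam ≠ 0) (C : ℝ) (hC : 0 < C)
    (fS : ℝ → ℝ → ℝ)
    (hfS : ∀ θ₁ θ₂ : ℝ, fS θ₁ θ₂ =
      C * Real.exp (κ₁ * Real.cos θ₁ + κ₂ * Real.cos θ₂ +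
        lam * Real.sin θ₁ * Real.sin θ₂))
    (α₁ α₂ β₁ β₂ : ℝ)
    (h : ∀ θ₁ θ₂ : ℝ,
      α₁ * deriv (fun s => fS s θ₂) θ₁ + α₂ * deriv (fun s => fS θ₁ s) θ₂ =
        fS θ₁ θ₂ * (β₁ * Real.sin θ₁ + β₂ * Real.sin θ₂)) :
    α₁ = 0 ∧ α₂ = 0 ∧ β₁ = 0 ∧ β₂ = 0 := by
  obtain rfl : fS = fun θ₁ θ₂ => C * exp (sineExponent κ₁ κ₂ lam θ₁ θ₂) :=
    funext₂ hfS
  refine coeffs_eq_zero_of_sine_score_identity κ₁ κ₂ hlam fun θ₁ θ₂ => ?_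
  have hf_pos : 0 < C * exp (sineExponent κ₁ κ₂ lam θ₁ θ₂) := by positivity
  have hθ := h θ₁ θ₂
  rw [((hasDerivAt_sineExponent_fst κ₁ κ₂ lam θ₁ θ₂).exp.const_mul C).deriv,
    ((hasDerivAt_sineExponent_snd κ₁ κ₂ lam θ₁ θ₂).exp.const_mul C).deriv] at hθ
  apply mul_left_cancel₀ hf_pos.ne'
  linear_combination hθ
end

section
/- Let d ≥ 2, κ ∈ ℝ^d, and let Δ ∈ ℝ^{d×d} be symmetric with Δ_{ii} = 0 for all i. Let C > 0 and define the multivariate Cosine density f(θ) = C · exp(Σ_{i=1}^d κᵢ cos(θᵢ) − Σ_{j=1}^d Σ_{k=1, k≠j}^d Δ_{jk} cos(θₖ − θⱼ)) for θ ∈ ℝ^d. Then for all θ ∈ ℝ^d, Σ_{i=1}^d ∂f/∂θᵢ(θ) = −f(θ) · Σ_{i=1}^d κᵢ sin(θᵢ); that is, the sine-skewing score dependence equation Σᵢ αᵢ ∂f/∂θᵢ = f Σᵢ βᵢ sin(θᵢ) holds with α = (1,…,1) and β = −κ. -/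
/-!
The interaction term depends on `θ` only through the differences `θₖ - θⱼ`, so it is constant
along the diagonal direction `(1, …, 1)`. The sum of the partial derivatives of `f` is its
derivative along that direction, hence only the term `∑ κᵢ cos θᵢ` contributes, with derivative
`-∑ κᵢ sin θᵢ`, and the chain rule for `C * exp` multiplies this by `f θ`.
-/

open Real Finset

theorem map_sum_pi_single_one {ι M N F : Type*} [Fintype ι] [DecidableEq ι] [AddCommMonoid M]
    [One M] [AddCommMonoid N] [FunLike F (ι → M) N] [AddMonoidHomClass F (ι → M) N] (L : F) :
    ∑ i, L (Pi.single i 1) = L 1 := by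
  rw [← map_sum]
  exact congrArg L (univ_sum_single 1)

section LineDeriv

variable {𝕜 E F : Type*} [NontriviallyNormedField 𝕜] [AddCommGroup E] [Module 𝕜 E]
  [NormedAddCommGroup F] [NormedSpace 𝕜 F]

theorem HasDerivAt.comp_hasLineDerivAt {g : 𝕜 → F} {g' : F} {φ : E → 𝕜} {φ' : 𝕜} {x v : E}
    (hg : HasDerivAt g g' (φ x)) (hφ : HasLineDerivAt 𝕜 φ φ' x v) :
    HasLineDerivAt 𝕜 (fun y => g (φ y)) (φ' • g') x v := by
  have hg₀ : HasDerivAt g g' (φ (x + (0 : 𝕜) • v)) := by rwa [zero_smul, add_zero]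
  exact hg₀.scomp (0 : 𝕜) hφ

theorem hasLineDerivAt_zero_of_forall_add_smul_eq {g : E → F} {x v : E}
    (hg : ∀ t : 𝕜, g (x + t • v) = g x) : HasLineDerivAt 𝕜 g 0 x v := by
  have hconst : (fun t : 𝕜 => g (x + t • v)) = fun _ => g x := funext hg
  unfold HasLineDerivAt
  rw [hconst]
  exact hasDerivAt_const 0 (g x)

end LineDeriv

section Torus

variable {ι : Type*} [Fintype ι]

theorem hasLineDerivAt_sum_mul_cos (κ θ : ι → ℝ) :
    HasLineDerivAt ℝ (fun θ : ι → ℝ => ∑ i, κ i * cos (θ i)) (-∑ i, κ i * sin (θ i)) θ 1 := by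
  unfold HasLineDerivAt
  rw [← sum_neg_distrib]
  refine HasDerivAt.fun_sum fun i _ => ?_
  have hline : HasDerivAt (fun t : ℝ => θ i + t * 1) 1 0 := by
    simpa using (hasDerivAt_id (0 : ℝ)).const_add (θ i)
  simpa using (hline.cos.const_mul (κ i))

theorem sum_mul_cos_sub_add_smul_one (s : ι → Finset ι) (Δ : ι → ι → ℝ) (θ : ι → ℝ) (t : ℝ) :
    ∑ j, ∑ k ∈ s j, Δ j k * cos ((θ + t • 1) k - (θ + t • 1) j) =
      ∑ j, ∑ k ∈ s j, Δ j k * cos (θ k - θ j) := by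
  simp only [Pi.add_apply, Pi.smul_apply, Pi.one_apply, smul_eq_mul, mul_one,
    add_sub_add_right_eq_sub]

theorem hasLineDerivAt_cosine_exponent (s : ι → Finset ι) (κ : ι → ℝ) (Δ : ι → ι → ℝ)
    (θ : ι → ℝ) :
    HasLineDerivAt ℝ
      (fun θ : ι → ℝ => ∑ i, κ i * cos (θ i) - ∑ j, ∑ k ∈ s j, Δ j k * cos (θ k - θ j))
      (-∑ i, κ i * sin (θ i)) θ 1 := by
  have hinteraction : HasLineDerivAt ℝ
      (fun θ : ι → ℝ => ∑ j, ∑ k ∈ s j, Δ j k * cos (θ k - θ j)) 0 θ 1 :=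
    hasLineDerivAt_zero_of_forall_add_smul_eq (sum_mul_cos_sub_add_smul_one s Δ θ)
  -- `HasLineDerivAt` unfolds to a `HasDerivAt` statement, so `HasDerivAt.sub` applies.
  have hsub := (hasLineDerivAt_sum_mul_cos κ θ).sub hinteraction
  rwa [sub_zero] at hsub

end Torus

theorem stmt13_general (d : ℕ) (κ : Fin d → ℝ)
    (Δ : Matrix (Fin d) (Fin d) ℝ)
    (C : ℝ) (f : (Fin d → ℝ) → ℝ)
    (hf : ∀ θ : Fin d → ℝ, f θ = C * Real.exp (∑ i, κ i * Real.cos (θ i) -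
      ∑ j, ∑ k ∈ Finset.univ.erase j, Δ j k * Real.cos (θ k - θ j))) :
    ∀ θ : Fin d → ℝ,
      ∑ i, fderiv ℝ f θ (Pi.single i 1) = -(f θ * ∑ i, κ i * Real.sin (θ i)) := by
  obtain rfl := funext hf
  intro θ
  have hf_line := ((hasDerivAt_exp _).const_mul C).comp_hasLineDerivAt
    (hasLineDerivAt_cosine_exponent (fun j => univ.erase j) κ Δ θ)
  rw [map_sum_pi_single_one, ← DifferentiableAt.lineDeriv_eq_fderiv (by fun_prop),
    hf_line.lineDeriv, smul_eq_mul]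
  ring

theorem stmt13 (d : ℕ) (hd : 2 ≤ d) (κ : Fin d → ℝ)
    (Δ : Matrix (Fin d) (Fin d) ℝ) (hsymm : Δ.IsSymm) (hdiag : ∀ i, Δ i i = 0)
    (C : ℝ) (hC : 0 < C) (f : (Fin d → ℝ) → ℝ)
    (hf : ∀ θ : Fin d → ℝ, f θ = C * Real.exp (∑ i, κ i * Real.cos (θ i) -
      ∑ j, ∑ k ∈ Finset.univ.erase j, Δ j k * Real.cos (θ k - θ j))) :
    ∀ θ : Fin d → ℝ,
      ∑ i, fderiv ℝ f θ (Pi.single i 1) = -(f θ * ∑ i, κ i * Real.sin (θ i)) :=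
  stmt13_general d κ Δ C f hf
end

section
/- Let c > 0 and c₀, c₁, c₂, c₃, c₄ ∈ ℝ with c₁ > 0 and c₂ > 0, and suppose D(θ₁, θ₂) := c₀ − c₁ cos(θ₁) − c₂ cos(θ₂) − c₃ cos(θ₁) cos(θ₂) − c₄ sin(θ₁) sin(θ₂) > 0 for all (θ₁, θ₂) ∈ ℝ². Define the bivariate wrapped Cauchy density f(θ₁, θ₂) = c / D(θ₁, θ₂). If α₁, α₂, β₁, β₂ ∈ ℝ satisfy α₁ ∂f/∂θ₁(θ) + α₂ ∂f/∂θ₂(θ) = f(θ) (β₁ sin(θ₁) + β₂ sin(θ₂)) for all θ = (θ₁, θ₂) ∈ ℝ², then α₁ = α₂ = β₁ = β₂ = 0. -/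
/-!
Since `∂ᵢf = -c ∂ᵢD / D²`, multiplying the relation by `-D² / c` turns it into the trigonometric
identity `α₁ ∂₁D + α₂ ∂₂D + D (β₁ sin θ₁ + β₂ sin θ₂) = 0`. Adding its restrictions to `θ₂ = 0`
and `θ₂ = π` kills every term involving `c₃`, `c₄` and `α₂`, leaving
`2 sin θ₁ (α₁ c₁ + c₀ β₁ - c₁ β₁ cos θ₁) = 0` for all `θ₁`; hence `β₁ = 0` and then `α₁ = 0`.
The density is symmetric under swapping the two coordinates, which gives `α₂ = β₂ = 0`.
-/

open Real

noncomputable section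

namespace BivariateWrappedCauchy

def denom (c₀ c₁ c₂ c₃ c₄ θ₁ θ₂ : ℝ) : ℝ :=
  c₀ - c₁ * cos θ₁ - c₂ * cos θ₂ - c₃ * cos θ₁ * cos θ₂ - c₄ * sin θ₁ * sin θ₂

/-- `∂₁ denom`; the second partial derivative is `denomDerivFst c₂ c₃ c₄ θ₂ θ₁`. -/
def denomDerivFst (c₁ c₃ c₄ θ₁ θ₂ : ℝ) : ℝ :=
  c₁ * sin θ₁ + c₃ * sin θ₁ * cos θ₂ - c₄ * cos θ₁ * sin θ₂

/-- The relation `α₁ ∂₁f + α₂ ∂₂f = f (β₁ sin θ₁ + β₂ sin θ₂)` for `f = c / denom`, multiplied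
by `-denom² / c`. -/
def ClearedScoreRelation (c₀ c₁ c₂ c₃ c₄ α₁ α₂ β₁ β₂ : ℝ) : Prop :=
  ∀ θ₁ θ₂, α₁ * denomDerivFst c₁ c₃ c₄ θ₁ θ₂ + α₂ * denomDerivFst c₂ c₃ c₄ θ₂ θ₁ +
    denom c₀ c₁ c₂ c₃ c₄ θ₁ θ₂ * (β₁ * sin θ₁ + β₂ * sin θ₂) = 0

variable {c₀ c₁ c₂ c₃ c₄ : ℝ}

theorem denom_swap (θ₁ θ₂ : ℝ) : denom c₀ c₁ c₂ c₃ c₄ θ₁ θ₂ = denom c₀ c₂ c₁ c₃ c₄ θ₂ θ₁ := by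
  unfold denom
  ring

theorem hasDerivAt_denom_fst (θ₁ θ₂ : ℝ) :
    HasDerivAt (fun s => denom c₀ c₁ c₂ c₃ c₄ s θ₂) (denomDerivFst c₁ c₃ c₄ θ₁ θ₂) θ₁ := by
  have hcos := hasDerivAt_cos θ₁
  have hsin := hasDerivAt_sin θ₁
  refine (((((hasDerivAt_const θ₁ c₀).sub (hcos.const_mul c₁)).sub
    (hasDerivAt_const θ₁ (c₂ * cos θ₂))).sub ((hcos.const_mul c₃).mul_const (cos θ₂))).sub
    ((hsin.const_mul c₄).mul_const (sin θ₂))).congr_deriv ?_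
  unfold denomDerivFst
  ring

theorem hasDerivAt_denom_snd (θ₁ θ₂ : ℝ) :
    HasDerivAt (fun s => denom c₀ c₁ c₂ c₃ c₄ θ₁ s) (denomDerivFst c₂ c₃ c₄ θ₂ θ₁) θ₂ := by
  simp only [denom_swap θ₁]
  exact hasDerivAt_denom_fst θ₂ θ₁

theorem clearedScoreRelation_of_deriv {c α₁ α₂ β₁ β₂ : ℝ} (hc : c ≠ 0)
    (hD : ∀ θ₁ θ₂, denom c₀ c₁ c₂ c₃ c₄ θ₁ θ₂ ≠ 0)
    (h : ∀ θ₁ θ₂, α₁ * deriv (fun s => c / denom c₀ c₁ c₂ c₃ c₄ s θ₂) θ₁ +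
      α₂ * deriv (fun s => c / denom c₀ c₁ c₂ c₃ c₄ θ₁ s) θ₂ =
        c / denom c₀ c₁ c₂ c₃ c₄ θ₁ θ₂ * (β₁ * sin θ₁ + β₂ * sin θ₂)) :
    ClearedScoreRelation c₀ c₁ c₂ c₃ c₄ α₁ α₂ β₁ β₂ := by
  intro θ₁ θ₂
  have hθ := h θ₁ θ₂
  have hDθ := hD θ₁ θ₂
  have h₁ : HasDerivAt (denom c₀ c₁ c₂ c₃ c₄ · θ₂) (denomDerivFst c₁ c₃ c₄ θ₁ θ₂) θ₁ :=
    hasDerivAt_denom_fst θ₁ θ₂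
  have h₂ : HasDerivAt (denom c₀ c₁ c₂ c₃ c₄ θ₁ ·) (denomDerivFst c₂ c₃ c₄ θ₂ θ₁) θ₂ :=
    hasDerivAt_denom_snd θ₁ θ₂
  rw [deriv_const_div c h₁.differentiableAt hDθ, deriv_const_div c h₂.differentiableAt hDθ,
    h₁.deriv, h₂.deriv] at hθ
  field_simp at hθ
  linear_combination -hθ

theorem eq_zero_of_sin_mul_sub_mul_cos_eq_zero {A B : ℝ} (h : ∀ x, sin x * (A - B * cos x) = 0) :
    A = 0 ∧ B = 0 := by
  have hA : A = 0 := by simpa using h (π / 2)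
  refine ⟨hA, ?_⟩
  simpa [hA] using h (π / 4)

namespace ClearedScoreRelation

variable {α₁ α₂ β₁ β₂ : ℝ}

theorem swap (h : ClearedScoreRelation c₀ c₁ c₂ c₃ c₄ α₁ α₂ β₁ β₂) :
    ClearedScoreRelation c₀ c₂ c₁ c₃ c₄ α₂ α₁ β₂ β₁ := fun θ₂ θ₁ => by
  rw [← denom_swap]
  linear_combination h θ₁ θ₂

theorem fst_eq_zero (h : ClearedScoreRelation c₀ c₁ c₂ c₃ c₄ α₁ α₂ β₁ β₂) (hc₁ : c₁ ≠ 0) :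
    α₁ = 0 ∧ β₁ = 0 := by
  have hsum : ∀ x, sin x * ((α₁ * c₁ + c₀ * β₁) - c₁ * β₁ * cos x) = 0 := fun x => by
    have h₀ := h x 0
    have hπ := h x π
    simp only [denom, denomDerivFst, sin_zero, cos_zero, sin_pi, cos_pi] at h₀ hπ
    linear_combination (h₀ + hπ) / 2
  obtain ⟨hA, hB⟩ := eq_zero_of_sin_mul_sub_mul_cos_eq_zero hsum
  have hβ₁ : β₁ = 0 := by simpa [hc₁] using hB
  refine ⟨?_, hβ₁⟩
  simpa [hβ₁, hc₁] using hA

end ClearedScoreRelation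

end BivariateWrappedCauchy

end

open BivariateWrappedCauchy

theorem stmt14 (c c₀ c₁ c₂ c₃ c₄ : ℝ) (hc : 0 < c) (hc₁ : 0 < c₁) (hc₂ : 0 < c₂)
    (D : ℝ → ℝ → ℝ)
    (hD : ∀ θ₁ θ₂ : ℝ, D θ₁ θ₂ = c₀ - c₁ * Real.cos θ₁ - c₂ * Real.cos θ₂ -
      c₃ * Real.cos θ₁ * Real.cos θ₂ - c₄ * Real.sin θ₁ * Real.sin θ₂)
    (hDpos : ∀ θ₁ θ₂ : ℝ, 0 < D θ₁ θ₂)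
    (f : ℝ → ℝ → ℝ) (hf : ∀ θ₁ θ₂ : ℝ, f θ₁ θ₂ = c / D θ₁ θ₂)
    (α₁ α₂ β₁ β₂ : ℝ)
    (h : ∀ θ₁ θ₂ : ℝ,
      α₁ * deriv (fun s => f s θ₂) θ₁ + α₂ * deriv (fun s => f θ₁ s) θ₂ =
        f θ₁ θ₂ * (β₁ * Real.sin θ₁ + β₂ * Real.sin θ₂)) :
    α₁ = 0 ∧ α₂ = 0 ∧ β₁ = 0 ∧ β₂ = 0 := by
  obtain rfl : D = denom c₀ c₁ c₂ c₃ c₄ := funext₂ hD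
  obtain rfl : f = fun θ₁ θ₂ => c / denom c₀ c₁ c₂ c₃ c₄ θ₁ θ₂ := funext₂ hf
  have hcleared : ClearedScoreRelation c₀ c₁ c₂ c₃ c₄ α₁ α₂ β₁ β₂ :=
    clearedScoreRelation_of_deriv hc.ne' (fun θ₁ θ₂ => (hDpos θ₁ θ₂).ne') h
  obtain ⟨hα₁, hβ₁⟩ := hcleared.fst_eq_zero hc₁.ne'
  obtain ⟨hα₂, hβ₂⟩ := hcleared.swap.fst_eq_zero hc₂.ne'
  exact ⟨hα₁, hα₂, hβ₁, hβ₂⟩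
end

section
/- Let f₀ : ℝ² → (0, ∞) be continuous, 2π-periodic in each coordinate, and even (f₀(−θ) = f₀(θ) for all θ), and let m be a positive integer and μ ∈ ℝ². For λ = (λ₁, λ₂) ∈ ℝ² with |λ₁| + |λ₂| ≤ 1, define g_λ(θ) = f₀(θ − μ) · ((1 + λ₁ sin(θ₁ − μ₁) + λ₂ sin(θ₂ − μ₂))/2)^m and the normalized density p_λ(θ) = g_λ(θ) / ∫_{[−π,π]²} g_λ(η) dη. Then for each j ∈ {1, 2} and each fixed θ ∈ ℝ², the map λ ↦ log p_λ(θ) has partial derivative with respect to λⱼ at λ = 0 equal to m · sin(θⱼ − μⱼ). -/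
/-!
Write `g_s(η) = w(η) (1 + s a(η))^m` with `w(η) = f₀(η - μ) / 2^m` and `a(η) = sin(η_j - μ_j)`.
The derivative of `log (g_s(θ) / ∫ g_s)` at `s = 0` is `m a(θ) - m ∫ w a / ∫ w`, and the
correction term vanishes: `ζ ↦ f₀ ζ sin ζ_j` is odd and `2π`-periodic in each coordinate, so the
integral of its translate by `μ` over `[-π, π]²` equals its integral over the box centred at the
origin, which is zero.
-/

open Real MeasureTheory
open Set Function
open scoped Pointwise

section PeriodicIntegral

variable {F : Type*} [NormedAddCommGroup F] [NormedSpace ℝ F]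

theorem Function.Odd.setIntegral_eq_zero {G : Type*} [AddGroup G] [MeasurableSpace G]
    [MeasurableNeg G] {ν : Measure G} [ν.IsNegInvariant] {f : G → F} (hf : f.Odd)
    {s : Set G} (hs : -s = s) : ∫ x in s, f x ∂ν = 0 := by
  have h := (Measure.measurePreserving_neg ν).setIntegral_preimage_emb
    (MeasurableEquiv.neg G).measurableEmbedding f s
  rw [neg_preimage, hs] at h
  simp only [hf.eq, integral_neg] at h
  have := IsAddTorsionFree.of_isTorsionFree ℝ F
  exact neg_eq_self.mp h

theorem ZSpan.setIntegral_vadd_fundamentalDomain {E ι : Type*} [Fintype ι]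
    [NormedAddCommGroup E] [NormedSpace ℝ E] [MeasurableSpace E] [BorelSpace E]
    [FiniteDimensional ℝ E] (ν : Measure E) [ν.IsAddHaarMeasure] (b : Module.Basis ι ℝ E)
    {H : E → F} (hH : ∀ i, Periodic H (b i)) (a : E) :
    ∫ x in a +ᵥ fundamentalDomain b, H x ∂ν = ∫ x in fundamentalDomain b, H x ∂ν := by
  have : Countable (Submodule.span ℤ (range b)).toAddSubgroup :=
    inferInstanceAs (Countable (Submodule.span ℤ (range b)))
  have hspan : ∀ v ∈ Submodule.span ℤ (range b), Periodic H v := by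
    intro v hv
    induction hv using Submodule.span_induction with
    | mem v hv => obtain ⟨i, rfl⟩ := hv; exact hH i
    | zero => exact fun x => by rw [add_zero]
    | add v w _ _ hv hw => exact hv.add_period hw
    | smul n v _ hv => exact hv.zsmul n
  have hdom := ZSpan.isAddFundamentalDomain' b ν
  exact (hdom.vadd_of_comm a).setIntegral_eq hdom fun v x => by
    rw [Submodule.vadd_def, vadd_eq_add, add_comm]
    exact hspan v v.2 x

variable {ι : Type*} [Fintype ι] {T : ℝ}

theorem vadd_fundamentalDomain_isUnitSMul_basisFun (hT : 0 < T) (a : ι → ℝ) :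
    a +ᵥ ZSpan.fundamentalDomain ((Pi.basisFun ℝ ι).isUnitSMul fun _ => hT.ne'.isUnit) =
      univ.pi fun i => Ico (a i) (a i + T) := by
  ext x
  simp only [mem_vadd_set_iff_neg_vadd_mem, ZSpan.mem_fundamentalDomain,
    Module.Basis.repr_isUnitSMul, Units.smul_def, Units.val_inv_eq_inv_val, IsUnit.unit_spec,
    mem_pi, mem_univ, true_implies, mem_Ico, vadd_eq_add, smul_eq_mul, Pi.basisFun_repr,
    Pi.add_apply, Pi.neg_apply]
  refine forall_congr' fun i => ?_
  rw [← div_eq_inv_mul, le_div_iff₀ hT, div_lt_one hT]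
  constructor <;> rintro ⟨h₁, h₂⟩ <;> constructor <;> linarith

variable [DecidableEq ι] {H : (ι → ℝ) → F}

theorem setIntegral_Icc_pi_eq_of_periodic (hT : 0 < T) (hH : ∀ i, Periodic H (Pi.single i T))
    (a c : ι → ℝ) :
    ∫ x in Icc a (a + fun _ => T), H x = ∫ x in Icc c (c + fun _ => T), H x := by
  set b := (Pi.basisFun ℝ ι).isUnitSMul fun _ => hT.ne'.isUnit
  have hb : ∀ i, b i = Pi.single i T := fun i => by
    ext j
    simp [b, Module.Basis.isUnitSMul_apply, Pi.single_apply]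
  have hbox (a : ι → ℝ) : Icc a (a + fun _ => T) =ᵐ[volume] a +ᵥ ZSpan.fundamentalDomain b := by
    rw [vadd_fundamentalDomain_isUnitSMul_basisFun hT]
    exact Measure.univ_pi_Ico_ae_eq_Icc.symm
  rw [setIntegral_congr_set (hbox a), setIntegral_congr_set (hbox c),
    ZSpan.setIntegral_vadd_fundamentalDomain, ZSpan.setIntegral_vadd_fundamentalDomain] <;>
  simpa only [hb] using hH

theorem setIntegral_Icc_pi_comp_sub_eq_zero (hT : 0 < T) (hper : ∀ i, Periodic H (Pi.single i T))
    (hodd : H.Odd) (a c : ι → ℝ) :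
    ∫ x in Icc a (a + fun _ => T), H (x - c) = 0 := by
  set r : ι → ℝ := fun _ => T / 2
  calc ∫ x in Icc a (a + fun _ => T), H (x - c)
      = ∫ x in Icc (-r + c) (-r + c + fun _ => T), H (x - c) :=
        setIntegral_Icc_pi_eq_of_periodic hT (fun i => (hper i).sub_const c) a (-r + c)
    _ = ∫ x in Icc (-r) r, H x := by
        rw [show -r + c + (fun _ => T) = r + c by
            ext; simp only [r, Pi.add_apply, Pi.neg_apply]; ring, ← preimage_sub_const_Icc]
        exact (measurePreserving_sub_right volume c).setIntegral_preimage_emb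
          (measurableEmbedding_subRight c) H _
    _ = 0 := hodd.setIntegral_eq_zero (neg_Icc _ _ |>.trans (by rw [neg_neg]))

end PeriodicIntegral

theorem hasDerivAt_integral_mul_one_add_mul_pow {α : Type*} [MeasurableSpace α] {ν : Measure α}
    {w a : α → ℝ} (hw : Integrable w ν) (ha : AEStronglyMeasurable a ν) (ha_le : ∀ x, |a x| ≤ 1)
    (m : ℕ) :
    HasDerivAt (fun s => ∫ x, w x * (1 + s * a x) ^ m ∂ν) (m * ∫ x, w x * a x ∂ν) 0 := by
  set F' : ℝ → α → ℝ := fun s x => w x * (m * (1 + s * a x) ^ (m - 1) * a x)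
  have hderiv (s : ℝ) (x : α) :
      HasDerivAt (fun s => w x * (1 + s * a x) ^ m) (F' s x) s := by
    simpa using ((((hasDerivAt_id s).mul_const (a x)).const_add 1).pow m).const_mul (w x)
  have hbound (x : α) (s : ℝ) (hs : s ∈ Metric.ball 0 1) :
      ‖F' s x‖ ≤ ‖w x‖ * (m * 2 ^ (m - 1)) := by
    have hs : |s| ≤ 1 := by simpa using (Metric.mem_ball.mp hs).le
    have hbase : |1 + s * a x| ≤ 2 := calc
      |1 + s * a x| ≤ 1 + |s| * |a x| := by simpa [abs_mul] using abs_add_le 1 (s * a x)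
      _ ≤ 2 := by nlinarith [abs_nonneg s, abs_nonneg (a x), ha_le x]
    calc ‖F' s x‖ = ‖w x‖ * (m * (|1 + s * a x| ^ (m - 1) * |a x|)) := by
          simp only [F', norm_mul, Real.norm_eq_abs, Nat.abs_cast, abs_pow, mul_assoc]
      _ ≤ ‖w x‖ * (m * (2 ^ (m - 1) * 1)) := by gcongr; exact ha_le x
      _ = ‖w x‖ * (m * 2 ^ (m - 1)) := by rw [mul_one]
  have hmeas (s : ℝ) : AEStronglyMeasurable (fun x => w x * (1 + s * a x) ^ m) ν := by
    fun_prop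
  obtain ⟨-, h⟩ := hasDerivAt_integral_of_dominated_loc_of_deriv_le (Metric.ball_mem_nhds 0 one_pos)
    (Filter.Eventually.of_forall hmeas) (by simpa using hw) (by fun_prop)
    (ae_of_all _ hbound) (hw.norm.mul_const _) (ae_of_all _ fun x s _ => hderiv s x)
  refine h.congr_deriv ?_
  simp only [F', zero_mul, add_zero, one_pow, mul_one]
  rw [← integral_const_mul]
  congr 1; ext x; ring

theorem setIntegral_Icc_pi_pos {ι : Type*} [Fintype ι] {a b : ι → ℝ} (hab : ∀ i, a i < b i)
    {f : (ι → ℝ) → ℝ} (hf : ContinuousOn f (Icc a b)) (hpos : ∀ x ∈ Icc a b, 0 < f x) :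
    0 < ∫ x in Icc a b, f x := by
  rw [setIntegral_pos_iff_support_of_nonneg_ae
    ((ae_restrict_iff' measurableSet_Icc).mpr (ae_of_all _ fun x hx => (hpos x hx).le))
    (hf.integrableOn_compact isCompact_Icc)]
  have hsupp : support f ∩ Icc a b = Icc a b := inter_eq_right.mpr fun x hx => (hpos x hx).ne'
  rw [hsupp, volume_Icc_pi]
  exact CanonicallyOrderedAdd.prod_pos.mpr fun i _ => ENNReal.ofReal_pos.mpr (sub_pos.mpr (hab i))

theorem setIntegral_Icc_pi_mul_sin_sub_eq_zero {ι : Type*} [Fintype ι] [DecidableEq ι]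
    {f : (ι → ℝ) → ℝ} (hper : ∀ i, Periodic f (Pi.single i (2 * π))) (heven : f.Even)
    (μ : ι → ℝ) (j : ι) :
    ∫ η in Icc (fun _ => -π) (fun _ => π), f (η - μ) * sin (η j - μ j) = 0 := by
  have hH_per (i : ι) : Periodic (fun ζ => f ζ * sin (ζ j)) (Pi.single i (2 * π)) := by
    intro ζ
    rcases eq_or_ne i j with rfl | hij
    · simp [hper i ζ, sin_add_two_pi]
    · simp [hper i ζ, hij.symm]
  have hH_odd : Function.Odd fun ζ => f ζ * sin (ζ j) := fun ζ => by
    simp [heven.eq, sin_neg]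
  have h := setIntegral_Icc_pi_comp_sub_eq_zero two_pi_pos hH_per hH_odd (fun _ => -π) μ
  rwa [show ((fun _ => -π) + fun _ => 2 * π : ι → ℝ) = fun _ => π by ext; simp; ring] at h

theorem stmt17_general (f₀ : (Fin 2 → ℝ) → ℝ) (hpos : ∀ θ, 0 < f₀ θ)
    (hcont : Continuous f₀)
    (hper : ∀ (θ : Fin 2 → ℝ) (i : Fin 2), f₀ (θ + Pi.single i (2 * π)) = f₀ θ)
    (heven : ∀ θ, f₀ (-θ) = f₀ θ)
    (m : ℕ) (μ : Fin 2 → ℝ)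
    (g : (Fin 2 → ℝ) → (Fin 2 → ℝ) → ℝ)
    (hg : ∀ (lam θ : Fin 2 → ℝ), g lam θ = f₀ (θ - μ) *
      ((1 + lam 0 * Real.sin (θ 0 - μ 0) + lam 1 * Real.sin (θ 1 - μ 1)) / 2) ^ m) :
    ∀ (j : Fin 2) (θ : Fin 2 → ℝ), HasDerivAt (fun s : ℝ =>
      Real.log (g (Pi.single j s) θ /
        ∫ η in (Set.Icc (fun _ => -π) (fun _ => π) : Set (Fin 2 → ℝ)),
          g (Pi.single j s) η))
      (m * Real.sin (θ j - μ j)) 0 := by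
  intro j θ
  set w : (Fin 2 → ℝ) → ℝ := fun η => f₀ (η - μ) / 2 ^ m
  set a : (Fin 2 → ℝ) → ℝ := fun η => sin (η j - μ j)
  have hg_single (s : ℝ) (η : Fin 2 → ℝ) : g (Pi.single j s) η = w η * (1 + s * a η) ^ m := by
    rw [hg]
    fin_cases j <;> simp [w, a, div_pow] <;> ring
  have hsym : ∫ η in Icc (fun _ => -π) (fun _ => π), w η * a η = 0 := by
    simp only [w, a, div_mul_eq_mul_div, integral_div,
      setIntegral_Icc_pi_mul_sin_sub_eq_zero (fun i θ => hper θ i) heven μ j, zero_div]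
  have hw : Continuous w := by fun_prop
  have hnorm_deriv := hasDerivAt_integral_mul_one_add_mul_pow
    (hw.continuousOn.integrableOn_compact (μ := volume)
      (isCompact_Icc (a := fun _ => -π) (b := fun _ => π)))
    (by fun_prop : Continuous a).aestronglyMeasurable (fun η => abs_sin_le_one (η j - μ j)) m
  rw [hsym, mul_zero] at hnorm_deriv
  have hw0 (η : Fin 2 → ℝ) : 0 < w η := div_pos (hpos _) (by positivity)
  have hnorm_pos : 0 < ∫ η in Icc (fun _ => -π) (fun _ => π), w η :=
    setIntegral_Icc_pi_pos (fun _ => neg_lt_self pi_pos) hw.continuousOn fun η _ => hw0 η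
  have hnum_deriv : HasDerivAt (fun s => w θ * (1 + s * a θ) ^ m) (w θ * (m * a θ)) 0 := by
    simpa using ((((hasDerivAt_id (0 : ℝ)).mul_const (a θ)).const_add 1).pow m).const_mul (w θ)
  simp only [hg_single]
  refine ((hnum_deriv.div hnorm_deriv (by simpa using hnorm_pos.ne')).log
    (by simpa using ⟨(hw0 θ).ne', hnorm_pos.ne'⟩)).congr_deriv ?_
  simp only [Pi.div_apply, zero_mul, mul_zero, add_zero, one_pow, mul_one, sub_zero]
  field_simp [(hw0 θ).ne', hnorm_pos.ne']
  rfl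

theorem stmt17 (f₀ : (Fin 2 → ℝ) → ℝ) (hpos : ∀ θ, 0 < f₀ θ)
    (hcont : Continuous f₀)
    (hper : ∀ (θ : Fin 2 → ℝ) (i : Fin 2), f₀ (θ + Pi.single i (2 * π)) = f₀ θ)
    (heven : ∀ θ, f₀ (-θ) = f₀ θ)
    (m : ℕ) (hm : 1 ≤ m) (μ : Fin 2 → ℝ)
    (g : (Fin 2 → ℝ) → (Fin 2 → ℝ) → ℝ)
    (hg : ∀ (lam θ : Fin 2 → ℝ), g lam θ = f₀ (θ - μ) *
      ((1 + lam 0 * Real.sin (θ 0 - μ 0) + lam 1 * Real.sin (θ 1 - μ 1)) / 2) ^ m) :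
    ∀ (j : Fin 2) (θ : Fin 2 → ℝ), HasDerivAt (fun s : ℝ =>
      Real.log (g (Pi.single j s) θ /
        ∫ η in (Set.Icc (fun _ => -π) (fun _ => π) : Set (Fin 2 → ℝ)),
          g (Pi.single j s) η))
      (m * Real.sin (θ j - μ j)) 0 :=
  stmt17_general f₀ hpos hcont hper heven m μ g hg
end
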